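/- Let S be a left ample subsemigroup of an inverse semigroup T and let ρ̂_S : S → I_S, s ↦ σ_s, be as above. Then for every x ∈ S, the image of xx⁻¹ under ρ̂_S equals σ_x σ_x⁻¹ in I_S; in particular σ_x σ_x⁻¹ lies in the image of ρ̂_S, so the image of ρ̂_S is left ample in I_S. -/

import Mathlib

/-- An inverse semigroup: every element `a` has an inverse `a⁻¹`, and it is unique. -/
class InverseSemigroup (T : Type*) extends Semigroup T, Inv T where
  mul_inv_mul : ∀ a : T, a * a⁻¹ * a = a
  inv_mul_inv : ∀ a : T, a⁻¹ * a * a⁻¹ = a⁻¹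
  inv_unique : ∀ {a b : T}, a * b * a = a → b * a * b = b → b = a⁻¹

open scoped Classical

/-- The restriction σ_s = ρ_s|_{Tss⁻¹ ∩ Y} of the Wagner–Preston partial bijection
ρ_s : a ↦ a*s to a subset Y, as a partial map (an element of I_Y). -/
noncomputable def sigmaMap {T : Type*} [InverseSemigroup T] (Y : Set T) (s : T) : T → Option T :=
  fun a => if a ∈ Y ∧ ∃ t : T, a = t * (s * s⁻¹) then some (a * s) else none

/-- Composition of partial maps (the product in a symmetric inverse semigroup). -/
def pcomp {α : Type*} (f g : α → Option α) : α → Option α := fun a => (f a).bind g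

/-- The inverse of a partial map: defined on the image of an injective partial map. -/
noncomputable def pinv {α : Type*} (f : α → Option α) : α → Option α :=
  fun b => if h : ∃ a : α, f a = some b then some h.choose else none

namespace InverseSemigroup

variable {T : Type*} [InverseSemigroup T]

theorem isIdempotentElem_mul_inv (x : T) : IsIdempotentElem (x * x⁻¹) := by
  rw [IsIdempotentElem, ← mul_assoc, mul_inv_mul]

theorem inv_eq_self_of_isIdempotentElem {e : T} (he : IsIdempotentElem e) : e⁻¹ = e := by
  have h : e * e * e = e := by rw [he.eq, he.eq]
  exact (inv_unique h h).symm

theorem exists_eq_mul_iff_mul_eq {e a : T} (he : IsIdempotentElem e) :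
    (∃ t, a = t * e) ↔ a * e = a :=
  ⟨by rintro ⟨t, rfl⟩; rw [mul_assoc, he.eq], fun h => ⟨a, h.symm⟩⟩

end InverseSemigroup

open InverseSemigroup

section SigmaMap

variable {T : Type*} [InverseSemigroup T] (Y : Set T)

theorem sigmaMap_apply (s a : T) :
    sigmaMap Y s a = if a ∈ Y ∧ a * (s * s⁻¹) = a then some (a * s) else none := by
  simp only [sigmaMap, exists_eq_mul_iff_mul_eq (isIdempotentElem_mul_inv s)]

theorem sigmaMap_mul_inv_apply (x a : T) :
    sigmaMap Y (x * x⁻¹) a = if a ∈ Y ∧ a * (x * x⁻¹) = a then some a else none := by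
  have he := isIdempotentElem_mul_inv x
  rw [sigmaMap_apply, inv_eq_self_of_isIdempotentElem he, he.eq]
  split_ifs with h
  · rw [h.2]
  · rfl

/-- On its domain `a = a * s * s⁻¹ = σ_s(a) * s⁻¹`. -/
theorem sigmaMap_injective {s a a' b : T} (ha : sigmaMap Y s a = some b)
    (ha' : sigmaMap Y s a' = some b) : a = a' := by
  have recover : ∀ {c}, sigmaMap Y s c = some b → c = b * s⁻¹ := by
    intro c hc
    rw [sigmaMap_apply] at hc
    split_ifs at hc with h
    rw [← Option.some.inj hc, mul_assoc, h.2]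
  rw [recover ha, recover ha']

end SigmaMap

theorem pcomp_pinv_of_injective {α : Type*} {f : α → Option α}
    (hf : ∀ {a a' b}, f a = some b → f a' = some b → a = a') :
    pcomp f (pinv f) = fun a => (f a).map fun _ => a := by
  funext a
  cases h : f a with
  | none => simp [pcomp, h]
  | some b =>
    have hex : ∃ a', f a' = some b := ⟨a, h⟩
    simp [pcomp, h, pinv, dif_pos hex, hf hex.choose_spec h]

theorem sigmaMap_mul_inv_eq_pcomp_pinv {T : Type*} [InverseSemigroup T] (Y : Set T) (x : T) :
    sigmaMap Y (x * x⁻¹) = pcomp (sigmaMap Y x) (pinv (sigmaMap Y x)) := by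
  rw [pcomp_pinv_of_injective (sigmaMap_injective Y)]
  funext a
  rw [sigmaMap_mul_inv_apply, sigmaMap_apply]
  split_ifs <;> rfl

/-- If S is left ample in T then for every x ∈ S, the image of xx⁻¹ under ρ̂_S equals
σ_x σ_x⁻¹ in I_S; in particular σ_x σ_x⁻¹ lies in the image of ρ̂_S, so the image of ρ̂_S
is left ample in I_S. -/
theorem stmt9 {T : Type*} [InverseSemigroup T] (S : Subsemigroup T)
    (hla : ∀ s ∈ S, s * s⁻¹ ∈ S) (x : T) (hx : x ∈ S) :
    sigmaMap (S : Set T) (x * x⁻¹) =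
      pcomp (sigmaMap (S : Set T) x) (pinv (sigmaMap (S : Set T) x)) ∧
    ∃ s ∈ S, pcomp (sigmaMap (S : Set T) x) (pinv (sigmaMap (S : Set T) x)) =
      sigmaMap (S : Set T) s := by
  have h := sigmaMap_mul_inv_eq_pcomp_pinv (S : Set T) x
  exact ⟨h, x * x⁻¹, hla x hx, h.symm⟩
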